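/- Let q be an odd prime power, let n ≥ 1, let 0 ≤ d ≤ n, set W := {0}^d × F_q^{n−d}, and for i = 1, 2 and x_i ∈ F_q^d let W_i := (x_i, 0^{n−d}) + W. Let α, β, γ ∈ F_q and let Q(x,y) := α(x·x) + β(x·y) + γ(y·y) be a quadratic form on F_q^n × F_q^n. Then: (i) if α ≠ 0, for every z ∈ F_q^n one has |E_{x∈F_q^n} 1_{W_1}(x) ω^{Tr(Q(x,z))}| ≤ q^{−n/2}; and (ii) if Q is not identically zero, then |E_{x,y∈F_q^n} 1_{W_1}(x) 1_{W_2}(y) ω^{Tr(Q(x,y))}| ≤ q^{−n/2}. -/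

import Mathlib

open Finset

/-- The standard dot product on `F^n`. -/
def dotp {F : Type} [Field F] {n : ℕ} (x y : Fin n → F) : F := ∑ i, x i * y i

/-- The additive character `t ↦ ω^t` of `ZMod p`, where `ω = exp(2πi/p)`. -/
noncomputable def chi (p : ℕ) (t : ZMod p) : ℂ :=
  Complex.exp (2 * Real.pi * Complex.I * (t.val : ℂ) / (p : ℂ))

/-- The trace map from a field of characteristic `p` to `F_p = ZMod p`. -/
noncomputable def trp (p : ℕ) (F : Type) [Field F] [Algebra (ZMod p) F] (x : F) : ZMod p :=
  Algebra.trace (ZMod p) F x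

/-- The operator `G_n^α[f]`:
`G_n^α[f](x) = (1/(2t)) f†(x) Σ_j (ω^{Tr(α_j (x·x))} + ω^{−Tr(α_j (x·x))})`,
where `f†(x₁,…,xₙ) = f(x₁,…,x_d)`. -/
noncomputable def Gop (p : ℕ) (F : Type) [Field F] [Fintype F] [Algebra (ZMod p) F]
    {d n t : ℕ} (hdn : d ≤ n) (α : Fin t → F) (f : (Fin d → F) → ℝ) :
    (Fin n → F) → ℂ := fun x =>
  (1 / (2 * t) : ℂ) * ((f fun i => x (Fin.castLE hdn i) : ℝ) : ℂ) *
    ∑ j, (chi p (trp p F (α j * dotp x x)) + chi p (-(trp p F (α j * dotp x x))))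

/-- The Fourier coefficient `ĝ(r) = E_{x ∈ F_q^n} g(x) ω^{−Tr(r·x)}`. -/
noncomputable def fourierCoeffAt (p : ℕ) (F : Type) [Field F] [Fintype F] [Algebra (ZMod p) F]
    {n : ℕ} (g : (Fin n → F) → ℂ) (r : Fin n → F) : ℂ :=
  (∑ x : Fin n → F, g x * chi p (-(trp p F (dotp r x)))) / ((Fintype.card F : ℂ) ^ n)

set_option linter.unusedSectionVars false
set_option maxHeartbeats 1000000

open scoped Classical

section chiLemmas
variable (p : ℕ) [Fact p.Prime]

lemma chi_eq_pow (t : ZMod p) :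
    chi p t = Complex.exp (2 * Real.pi * Complex.I / p) ^ t.val := by
  rw [chi, ← Complex.exp_nat_mul]; ring_nf

lemma chi_zero : chi p (0 : ZMod p) = 1 := by
  have : (0 : ZMod p).val = 0 := ZMod.val_zero
  simp [chi_eq_pow, this]

lemma root_pow_p : Complex.exp (2 * Real.pi * Complex.I / p) ^ p = 1 := by
  have hp : (p : ℂ) ≠ 0 := Nat.cast_ne_zero.mpr (Fact.out : p.Prime).ne_zero
  rw [← Complex.exp_nat_mul]
  have : (p : ℂ) * (2 * Real.pi * Complex.I / p) = 2 * Real.pi * Complex.I := by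
    field_simp
  rw [this, Complex.exp_two_pi_mul_I]

lemma chi_add (a b : ZMod p) : chi p (a + b) = chi p a * chi p b := by
  simp only [chi_eq_pow, ← pow_add]
  rw [ZMod.val_add, ← pow_eq_pow_mod _ (root_pow_p p)]

lemma chi_abs (t : ZMod p) : ‖chi p t‖ = 1 := by
  have h : 2 * Real.pi * Complex.I * (t.val : ℂ) / p
      = ((2 * Real.pi * t.val / p : ℝ) : ℂ) * Complex.I := by
    push_cast; ring
  rw [chi, h, Complex.norm_exp_ofReal_mul_I]

lemma chi_ne_zero (t : ZMod p) : chi p t ≠ 0 := by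
  intro h; have := chi_abs p t; rw [h] at this; simp at this

lemma chi_conj (t : ZMod p) : (starRingEnd ℂ) (chi p t) = chi p (-t) := by
  have h1 : chi p t * chi p (-t) = 1 := by rw [← chi_add]; simp [chi_zero]
  have h2 : chi p t * (starRingEnd ℂ) (chi p t) = 1 := by
    rw [Complex.mul_conj, Complex.normSq_eq_norm_sq, chi_abs]; norm_num
  exact mul_left_cancel₀ (chi_ne_zero p t) (h2.trans h1.symm)

lemma chi_sum {ι : Type*} (s : Finset ι) (f : ι → ZMod p) :
    chi p (∑ i ∈ s, f i) = ∏ i ∈ s, chi p (f i) := by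
  induction s using Finset.cons_induction with
  | empty => simp [chi_zero]
  | cons a s ha ih => rw [Finset.sum_cons, Finset.prod_cons, chi_add, ih]


end chiLemmas

section chiNeOne
variable (p : ℕ) [Fact p.Prime]
lemma chi_ne_one' : chi p (1 : ZMod p) ≠ 1 := by
  have hp2 : 2 ≤ p := (Fact.out : p.Prime).two_le
  have hv : (1 : ZMod p).val = 1 := ZMod.val_one p
  rw [chi, hv]
  intro h
  rw [Complex.exp_eq_one_iff] at h
  obtain ⟨n, hn⟩ := h
  have hp : (p : ℂ) ≠ 0 := Nat.cast_ne_zero.mpr (by omega)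
  have hπ : (2 * (Real.pi:ℂ) * Complex.I) ≠ 0 := by
    simp [Real.pi_ne_zero, Complex.I_ne_zero]
  field_simp at hn
  have key : (2*(Real.pi:ℂ)*Complex.I) * (1 - n*p) = 0 := by
    linear_combination (2*(Real.pi:ℂ)*Complex.I) * hn
  rcases mul_eq_zero.mp key with h | h
  · exact hπ h
  · have h3 : ((n * p : ℤ) : ℂ) = 1 := by push_cast; linear_combination -h
    have h4 : (n * p : ℤ) = 1 := by exact_mod_cast h3
    have h5 : (p : ℤ) ∣ 1 := ⟨n, by linarith⟩
    have := Int.le_of_dvd one_pos h5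
    omega

end chiNeOne

section trpLemmas
variable (p : ℕ) [Fact p.Prime] (F : Type) [Field F] [Fintype F] [Algebra (ZMod p) F]
lemma trp_add (a b : F) : trp p F (a + b) = trp p F a + trp p F b :=
  map_add (Algebra.trace (ZMod p) F) a b

lemma trp_zero : trp p F 0 = 0 := map_zero (Algebra.trace (ZMod p) F)

lemma trp_neg (a : F) : trp p F (-a) = -trp p F a :=
  map_neg (Algebra.trace (ZMod p) F) a

lemma trp_sum {ι : Type*} (s : Finset ι) (f : ι → F) :
    trp p F (∑ i ∈ s, f i) = ∑ i ∈ s, trp p F (f i) :=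
  map_sum (Algebra.trace (ZMod p) F) f s

lemma trp_surj : Function.Surjective (trp p F) := by
  have : Module.Finite (ZMod p) F := Module.Finite.of_finite (R := ZMod p)
  exact Algebra.trace_surjective _ _

lemma sum_chi_eq_zero (c : F) (hc : c ≠ 0) :
    ∑ x : F, chi p (trp p F (c * x)) = 0 := by
  obtain ⟨u, hu⟩ := trp_surj p F 1
  set x₀ := c⁻¹ * u with hx₀def
  have hcx₀ : c * x₀ = u := by rw [hx₀def]; field_simp
  have hne : chi p (trp p F (c * x₀)) ≠ 1 := by
    rw [hcx₀, hu]; exact chi_ne_one' p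
  have hshift : ∑ x : F, chi p (trp p F (c * x))
      = (∑ x : F, chi p (trp p F (c * x))) * chi p (trp p F (c * x₀)) := by
    conv_lhs => rw [← Equiv.sum_comp (Equiv.addRight x₀) (fun x => chi p (trp p F (c * x)))]
    rw [Finset.sum_mul]
    refine Finset.sum_congr rfl fun x _ => ?_
    simp only [Equiv.coe_addRight]
    rw [mul_add, trp_add, chi_add]
  have h0 : (∑ x : F, chi p (trp p F (c * x))) * (chi p (trp p F (c * x₀)) - 1) = 0 := by
    rw [mul_sub, mul_one, ← hshift, sub_self]
  rcases mul_eq_zero.mp h0 with h | h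
  · exact h
  · exact absurd (by linear_combination h) hne

lemma sum_chi_ite (c : F) :
    ∑ x : F, chi p (trp p F (c * x)) = if c = 0 then (Fintype.card F : ℂ) else 0 := by
  split_ifs with h
  · simp [h, trp_zero, chi_zero]
  · exact sum_chi_eq_zero p F c h

end trpLemmas

section gaussLemmas
variable (p : ℕ) [Fact p.Prime] (F : Type) [Field F] [Fintype F] [Algebra (ZMod p) F]
lemma two_ne_zero'' (hp : Odd p) : (2 : F) ≠ 0 := by
  intro h
  have h0 : (2 : ZMod p) = 0 := by
    apply (algebraMap (ZMod p) F).injective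
    rw [map_ofNat, map_zero]
    exact_mod_cast h
  have h1 : ((2 : ℕ) : ZMod p) = 0 := by exact_mod_cast h0
  rw [ZMod.natCast_eq_zero_iff] at h1
  have hle := Nat.le_of_dvd (by norm_num) h1
  have h2le : 2 ≤ p := (Fact.out : p.Prime).two_le
  have hpe : p = 2 := by omega
  rw [hpe] at hp
  exact (by norm_num : ¬ Odd 2) hp

lemma gauss_abs (hp : Odd p) (a b : F) (ha : a ≠ 0) :
    ‖∑ x : F, chi p (trp p F (a * (x * x) + b * x))‖
      = Real.sqrt (Fintype.card F) := by
  set S := ∑ x : F, chi p (trp p F (a * (x * x) + b * x)) with hS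
  have hconj : (starRingEnd ℂ) S = ∑ y : F, chi p (trp p F (-(a * (y * y) + b * y))) := by
    rw [hS, map_sum]
    exact Finset.sum_congr rfl fun y _ => by rw [chi_conj, trp_neg]
  have key : S * (starRingEnd ℂ) S = (Fintype.card F : ℂ) := by
    rw [hconj, hS, Finset.sum_mul_sum]
    rw [Finset.sum_comm]
    have hre : ∀ y : F, ∑ x : F,
        chi p (trp p F (a * (x * x) + b * x)) * chi p (trp p F (-(a * (y * y) + b * y)))
        = ∑ u : F, chi p (trp p F (a * (u * u) + b * u)) * chi p (trp p F ((2 * a * u) * y)) := by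
      intro y
      rw [← Equiv.sum_comp (Equiv.addLeft y) (fun x =>
        chi p (trp p F (a * (x * x) + b * x)) * chi p (trp p F (-(a * (y * y) + b * y))))]
      refine Finset.sum_congr rfl fun u _ => ?_
      simp only [Equiv.coe_addLeft]
      rw [← chi_add, ← chi_add, ← trp_add, ← trp_add]
      congr 1
      ring_nf
    calc ∑ y : F, ∑ x : F,
          chi p (trp p F (a * (x * x) + b * x)) * chi p (trp p F (-(a * (y * y) + b * y)))
        = ∑ y : F, ∑ u : F, chi p (trp p F (a * (u * u) + b * u))
            * chi p (trp p F ((2 * a * u) * y)) := Finset.sum_congr rfl fun y _ => hre y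
      _ = ∑ u : F, chi p (trp p F (a * (u * u) + b * u))
            * ∑ y : F, chi p (trp p F ((2 * a * u) * y)) := by
          rw [Finset.sum_comm]
          exact Finset.sum_congr rfl fun u _ => by rw [Finset.mul_sum]
      _ = ∑ u : F, chi p (trp p F (a * (u * u) + b * u))
            * (if 2 * a * u = 0 then (Fintype.card F : ℂ) else 0) := by
          exact Finset.sum_congr rfl fun u _ => by rw [sum_chi_ite]
      _ = ∑ u : F, chi p (trp p F (a * (u * u) + b * u))
            * (if u = 0 then (Fintype.card F : ℂ) else 0) := by
          refine Finset.sum_congr rfl fun u _ => ?_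
          congr 1
          have h2a : 2 * a ≠ 0 := mul_ne_zero (two_ne_zero'' p F hp) ha
          simp [mul_eq_zero, h2a]
      _ = (Fintype.card F : ℂ) := by
          rw [Finset.sum_eq_single 0]
          · simp [trp_zero, chi_zero]
          · intro u _ hu; simp [hu]
          · intro h; simp at h
  have habs2 : ‖S‖ ^ 2 = (Fintype.card F : ℝ) := by
    have := key
    rw [Complex.mul_conj, Complex.normSq_eq_norm_sq] at this
    exact_mod_cast this
  rw [← habs2, Real.sqrt_sq (norm_nonneg S)]

end gaussLemmas

lemma dotp_comm {F : Type} [Field F] {n : ℕ} (x y : Fin n → F) : dotp x y = dotp y x := by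
  unfold dotp; exact Finset.sum_congr rfl fun i _ => mul_comm _ _

lemma sum_pi_prod {F R : Type} [Fintype F] [CommSemiring R] {n : ℕ} (h : Fin n → F → R) :
    ∑ x : Fin n → F, ∏ i, h i (x i) = ∏ i, ∑ t : F, h i t := (Fintype.prod_sum _).symm

section fact
variable {F : Type} [Field F] [Fintype F] {n d : ℕ}

/-- coordinatewise function incorporating the indicator constraint -/
noncomputable def hfun (x₀ : Fin d → F) (g : Fin n → F → ℂ) (i : Fin n) (t : F) : ℂ :=
  if hi : (i : ℕ) < d then (if t = x₀ ⟨i, hi⟩ then g i t else 0) else g i t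

lemma indicator_mul_prod (hdn : d ≤ n) (x₀ : Fin d → F) (g : Fin n → F → ℂ) (x : Fin n → F) :
    ({w : Fin n → F | ∀ i : Fin d, w (Fin.castLE hdn i) = x₀ i}).indicator 1 x * ∏ i, g i (x i)
      = ∏ i, hfun x₀ g i (x i) := by
  by_cases hx : ∀ j : Fin d, x (Fin.castLE hdn j) = x₀ j
  · rw [Set.indicator_of_mem (by exact hx), Pi.one_apply, one_mul]
    refine Finset.prod_congr rfl fun i _ => ?_
    unfold hfun
    split_ifs with hi hti
    · rfl
    · exact absurd (hx ⟨(i : ℕ), hi⟩) hti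
    · rfl
  · rw [Set.indicator_of_notMem (by exact hx), zero_mul]
    push_neg at hx
    obtain ⟨j, hj⟩ := hx
    refine (Finset.prod_eq_zero (Finset.mem_univ (Fin.castLE hdn j)) ?_).symm
    unfold hfun
    rw [dif_pos (show ((Fin.castLE hdn j : Fin n) : ℕ) < d from j.isLt)]
    rw [if_neg]
    exact hj
end fact

section main
variable (p : ℕ) [Fact p.Prime] (F : Type) [Field F] [Fintype F] [Algebra (ZMod p) F]
variable {n d : ℕ}

lemma sum_indicator_prod (hdn : d ≤ n) (x₀ : Fin d → F) (g : Fin n → F → ℂ) :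
    ∑ x : Fin n → F,
      ({w : Fin n → F | ∀ i : Fin d, w (Fin.castLE hdn i) = x₀ i}).indicator 1 x * ∏ i, g i (x i)
      = ∏ i, ∑ t : F, hfun x₀ g i t := by
  simp_rw [indicator_mul_prod hdn x₀ g]
  exact sum_pi_prod _

lemma sum_hfun_lt (x₀ : Fin d → F) (g : Fin n → F → ℂ) (i : Fin n) (hi : (i : ℕ) < d) :
    ∑ t : F, hfun x₀ g i t = g i (x₀ ⟨i, hi⟩) := by
  unfold hfun
  simp only [dif_pos hi]
  rw [Finset.sum_ite_eq' Finset.univ (x₀ ⟨(i : ℕ), hi⟩) (g i)]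
  simp

lemma sum_hfun_ge (x₀ : Fin d → F) (g : Fin n → F → ℂ) (i : Fin n) (hi : ¬ (i : ℕ) < d) :
    ∑ t : F, hfun x₀ g i t = ∑ t : F, g i t := by
  unfold hfun
  simp only [dif_neg hi]

lemma one_le_sqrt_card : (1 : ℝ) ≤ Real.sqrt (Fintype.card F) := by
  rw [show (1:ℝ) = Real.sqrt 1 from (Real.sqrt_one).symm]
  apply Real.sqrt_le_sqrt
  exact_mod_cast Fintype.card_pos

/-- Main single-variable estimate. -/
lemma helper1 (hp : Odd p) (hdn : d ≤ n) (x₀ : Fin d → F) (c₁ c₂ c₃ : F) (hc : c₁ ≠ 0)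
    (z : Fin n → F) :
    ‖∑ x : Fin n → F,
      ({w : Fin n → F | ∀ i : Fin d, w (Fin.castLE hdn i) = x₀ i}).indicator 1 x *
        chi p (trp p F (c₁ * dotp x x + c₂ * dotp x z + c₃ * dotp z z))‖
      ≤ Real.sqrt (Fintype.card F) ^ n := by
  set g : Fin n → F → ℂ := fun i t => chi p (trp p F (c₁ * (t * t) + (c₂ * z i) * t)) with hg
  have hsplit : ∀ x : Fin n → F,
      chi p (trp p F (c₁ * dotp x x + c₂ * dotp x z + c₃ * dotp z z))
        = chi p (trp p F (c₃ * dotp z z)) * ∏ i, g i (x i) := by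
    intro x
    have harg1 : c₁ * dotp x x + c₂ * dotp x z + c₃ * dotp z z
        = c₃ * dotp z z + (c₁ * dotp x x + c₂ * dotp x z) := by ring
    have harg2 : c₁ * dotp x x + c₂ * dotp x z
        = ∑ i, (c₁ * (x i * x i) + (c₂ * z i) * x i) := by
      unfold dotp
      rw [Finset.mul_sum, Finset.mul_sum, ← Finset.sum_add_distrib]
      exact Finset.sum_congr rfl fun i _ => by ring
    rw [harg1, trp_add, chi_add, harg2, trp_sum, chi_sum]
  have hre : ∑ x : Fin n → F,
      ({w : Fin n → F | ∀ i : Fin d, w (Fin.castLE hdn i) = x₀ i}).indicator 1 x *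
        chi p (trp p F (c₁ * dotp x x + c₂ * dotp x z + c₃ * dotp z z))
      = chi p (trp p F (c₃ * dotp z z)) * ∏ i, ∑ t : F, hfun x₀ g i t := by
    rw [← sum_indicator_prod F hdn x₀ g, Finset.mul_sum]
    exact Finset.sum_congr rfl fun x _ => by rw [hsplit x]; ring
  rw [hre, norm_mul, chi_abs, one_mul, norm_prod]
  calc ∏ i, ‖∑ t : F, hfun x₀ g i t‖
      ≤ ∏ _i : Fin n, Real.sqrt (Fintype.card F) := by
        refine Finset.prod_le_prod (fun i _ => norm_nonneg _) (fun i _ => ?_)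
        by_cases hi : (i : ℕ) < d
        · rw [sum_hfun_lt F x₀ g i hi, hg]
          simp only []
          rw [chi_abs]
          exact one_le_sqrt_card F
        · rw [sum_hfun_ge F x₀ g i hi, hg]
          simp only []
          rw [gauss_abs p F hp c₁ (c₂ * z i) hc]
    _ = Real.sqrt (Fintype.card F) ^ n := by
        rw [Finset.prod_const, Finset.card_univ, Fintype.card_fin]

/-- Bound for the bilinear case. -/
lemma helper2 (hdn : d ≤ n) (x₀ : Fin d → F) (b : Fin n → F) :
    ‖∑ x : Fin n → F,
      ({w : Fin n → F | ∀ i : Fin d, w (Fin.castLE hdn i) = x₀ i}).indicator 1 x *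
        chi p (trp p F (∑ i, b i * x i))‖
      ≤ ∏ i : Fin n, (if (i : ℕ) < d then 1 else (if b i = 0 then (Fintype.card F : ℝ) else 0)) := by
  set g : Fin n → F → ℂ := fun i t => chi p (trp p F (b i * t)) with hg
  have hre : ∑ x : Fin n → F,
      ({w : Fin n → F | ∀ i : Fin d, w (Fin.castLE hdn i) = x₀ i}).indicator 1 x *
        chi p (trp p F (∑ i, b i * x i))
      = ∏ i, ∑ t : F, hfun x₀ g i t := by
    rw [← sum_indicator_prod F hdn x₀ g]
    refine Finset.sum_congr rfl fun x _ => ?_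
    rw [trp_sum, chi_sum]
  rw [hre, norm_prod]
  refine Finset.prod_le_prod (fun i _ => norm_nonneg _) (fun i _ => ?_)
  by_cases hi : (i : ℕ) < d
  · rw [sum_hfun_lt F x₀ g i hi, if_pos hi, hg]
    simp only []
    rw [chi_abs]
  · rw [sum_hfun_ge F x₀ g i hi, if_neg hi, hg]
    simp only []
    rw [sum_chi_ite]
    split_ifs with hb
    · simp
    · simp
end main


lemma rp_calc (q : ℝ) (hq : 1 ≤ q) (s t u : ℝ) (h : s - t ≤ u) :
    q ^ s / q ^ t ≤ q ^ u := by
  have hq0 : (0 : ℝ) < q := lt_of_lt_of_le one_pos hq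
  rw [← Real.rpow_sub hq0]
  exact Real.rpow_le_rpow_of_exponent_le hq h

lemma sqrt_pow_eq (q : ℝ) (hq0 : 0 ≤ q) (n : ℕ) :
    Real.sqrt q ^ n = q ^ ((n : ℝ) / 2) := by
  rw [Real.sqrt_eq_rpow, ← Real.rpow_natCast (q ^ ((1:ℝ)/2)) n, ← Real.rpow_mul hq0]
  congr 1
  ring

lemma pow_eq_rpow (q : ℝ) (hq0 : 0 ≤ q) (n : ℕ) : q ^ n = q ^ ((n : ℝ)) :=
  (Real.rpow_natCast q n).symm

lemma abs_indicator_le_one {A : Type*} (S : Set A) (x : A) :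
    ‖(S.indicator 1 x : ℂ)‖ ≤ 1 := by
  rw [Set.indicator_apply]
  split_ifs
  · simp
  · simp

example (q : ℝ) (hq : 1 ≤ q) (n : ℕ) :
    Real.sqrt q ^ n / q ^ n ≤ q ^ (-(n:ℝ)/2) := by
  have hq0 : (0:ℝ) ≤ q := le_trans zero_le_one hq
  rw [sqrt_pow_eq q hq0, pow_eq_rpow q hq0]
  exact rp_calc q hq ((n:ℝ)/2) ((n:ℝ)) _ (by linarith)

section final
variable (p : ℕ) [Fact p.Prime] (F : Type) [Field F] [Fintype F] [Algebra (ZMod p) F]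
variable {n d : ℕ}

lemma case_helper (hp : Odd p) (hdn : d ≤ n) (x₀ : Fin d → F) (S : Set (Fin n → F))
    (c₁ c₂ c₃ : F) (hc₁ : c₁ ≠ 0) :
    ‖∑ z : Fin n → F, S.indicator 1 z * ∑ x : Fin n → F,
      ({w : Fin n → F | ∀ i : Fin d, w (Fin.castLE hdn i) = x₀ i}).indicator 1 x *
        chi p (trp p F (c₁ * dotp x x + c₂ * dotp x z + c₃ * dotp z z))‖
      ≤ (Fintype.card F : ℝ) ^ n * Real.sqrt (Fintype.card F) ^ n := by
  have hsqnn : (0:ℝ) ≤ Real.sqrt (Fintype.card F) ^ n := by positivity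
  calc ‖∑ z : Fin n → F, S.indicator 1 z * ∑ x : Fin n → F,
      ({w : Fin n → F | ∀ i : Fin d, w (Fin.castLE hdn i) = x₀ i}).indicator 1 x *
        chi p (trp p F (c₁ * dotp x x + c₂ * dotp x z + c₃ * dotp z z))‖
      ≤ ∑ z : Fin n → F, ‖S.indicator 1 z * ∑ x : Fin n → F,
        ({w : Fin n → F | ∀ i : Fin d, w (Fin.castLE hdn i) = x₀ i}).indicator 1 x *
          chi p (trp p F (c₁ * dotp x x + c₂ * dotp x z + c₃ * dotp z z))‖ :=
        norm_sum_le _ _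
    _ ≤ ∑ _z : Fin n → F, (1 : ℝ) * Real.sqrt (Fintype.card F) ^ n := by
        refine Finset.sum_le_sum fun z _ => ?_
        rw [norm_mul]
        exact mul_le_mul (abs_indicator_le_one S z)
          (helper1 p F hp hdn x₀ c₁ c₂ c₃ hc₁ z) (norm_nonneg _) zero_le_one
    _ = (Fintype.card F : ℝ) ^ n * Real.sqrt (Fintype.card F) ^ n := by
        rw [Finset.sum_const, Finset.card_univ, Fintype.card_fun, Fintype.card_fin,
          one_mul, nsmul_eq_mul]
        push_cast
        ring
end final


/-- exponential-sum estimates over affine subspaces for the quadratic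
form `Q(x,y) = α(x·x) + β(x·y) + γ(y·y)`; `W₁, W₂` are the translates of
`W = {0}^d × F_q^{n−d}` by `(x₁, 0^{n−d})` and `(x₂, 0^{n−d})` respectively. -/
theorem exp_sum_quadratic_form_bound (p : ℕ) [Fact p.Prime] (hp : Odd p)
    (F : Type) [Field F] [Fintype F] [Algebra (ZMod p) F]
    {n d : ℕ} (hn : 1 ≤ n) (hdn : d ≤ n)
    (x₁ x₂ : Fin d → F) (α β γ : F) :
    let W₁ : Set (Fin n → F) := {w | ∀ i : Fin d, w (Fin.castLE hdn i) = x₁ i}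
    let W₂ : Set (Fin n → F) := {w | ∀ i : Fin d, w (Fin.castLE hdn i) = x₂ i}
    let Q : (Fin n → F) → (Fin n → F) → F := fun x y =>
      α * dotp x x + β * dotp x y + γ * dotp y y
    (α ≠ 0 → ∀ z : Fin n → F,
      ‖((∑ x : Fin n → F, W₁.indicator 1 x * chi p (trp p F (Q x z))) /
          ((Fintype.card F : ℂ) ^ n))‖ ≤
        (Fintype.card F : ℝ) ^ (-(n : ℝ) / 2)) ∧
    ((∃ x y : Fin n → F, Q x y ≠ 0) →
      ‖((∑ x : Fin n → F, ∑ y : Fin n → F,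
            W₁.indicator 1 x * W₂.indicator 1 y * chi p (trp p F (Q x y))) /
          ((Fintype.card F : ℂ) ^ (2 * n)))‖ ≤
        (Fintype.card F : ℝ) ^ (-(n : ℝ) / 2)) := by
  intro W₁ W₂ Q
  have hq1 : (1:ℝ) ≤ (Fintype.card F : ℝ) := by exact_mod_cast Fintype.card_pos
  have hq0 : (0:ℝ) ≤ (Fintype.card F : ℝ) := le_trans zero_le_one hq1
  have hqpos : (0:ℝ) < (Fintype.card F : ℝ) := lt_of_lt_of_le one_pos hq1
  constructor
  · intro hα z
    rw [norm_div, norm_pow, Complex.norm_natCast]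
    calc ‖∑ x : Fin n → F, W₁.indicator 1 x * chi p (trp p F (Q x z))‖ /
          (Fintype.card F : ℝ) ^ n
        ≤ Real.sqrt (Fintype.card F) ^ n / (Fintype.card F : ℝ) ^ n := by
          gcongr
          exact helper1 p F hp hdn x₁ α β γ hα z
      _ ≤ (Fintype.card F : ℝ) ^ (-(n : ℝ) / 2) := by
          rw [sqrt_pow_eq _ hq0, pow_eq_rpow _ hq0]
          exact rp_calc _ hq1 _ _ _ (by linarith)
  · intro hQex
    rw [norm_div, norm_pow, Complex.norm_natCast]
    by_cases hα : α = 0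
    · by_cases hγ : γ = 0
      · have hβ : β ≠ 0 := by
          rintro hβ
          obtain ⟨x, y, hxy⟩ := hQex
          exact hxy (by simp [Q, hα, hβ, hγ])
        have hQ' : ∀ x y : Fin n → F, Q x y = ∑ i, (β * y i) * x i := by
          intro x y
          simp only [Q, hα, hγ, dotp, Finset.mul_sum, zero_mul, Finset.sum_const_zero,
            add_zero, zero_add]
          exact Finset.sum_congr rfl fun i _ => by ring
        have hcomm : ∑ x : Fin n → F, ∑ y : Fin n → F,
            W₁.indicator 1 x * W₂.indicator 1 y * chi p (trp p F (Q x y))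
            = ∑ y : Fin n → F, W₂.indicator 1 y * ∑ x : Fin n → F,
              W₁.indicator 1 x * chi p (trp p F (∑ i, (β * y i) * x i)) := by
          rw [Finset.sum_comm]
          refine Finset.sum_congr rfl fun y _ => ?_
          rw [Finset.mul_sum]
          exact Finset.sum_congr rfl fun x _ => by rw [hQ']; ring
        rw [hcomm]
        have hbound : ∀ y : Fin n → F,
            ‖W₂.indicator 1 y * ∑ x : Fin n → F,
              W₁.indicator 1 x * chi p (trp p F (∑ i, (β * y i) * x i))‖
            ≤ ∏ i : Fin n, (if (i : ℕ) < d then 1 else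
                (if y i = 0 then (Fintype.card F : ℝ) else 0)) := by
          intro y
          have h2 := helper2 p F hdn x₁ (fun i => β * y i)
          have heq : (∏ i : Fin n, (if (i : ℕ) < d then 1 else
                (if β * y i = 0 then (Fintype.card F : ℝ) else 0)))
              = ∏ i : Fin n, (if (i : ℕ) < d then 1 else
                (if y i = 0 then (Fintype.card F : ℝ) else 0)) := by
            refine Finset.prod_congr rfl fun i _ => ?_
            simp [mul_eq_zero, hβ]
          rw [norm_mul, ← heq]
          exact (mul_le_mul (abs_indicator_le_one W₂ y) h2 (norm_nonneg _)
            zero_le_one).trans_eq (one_mul _)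
        calc ‖∑ y : Fin n → F, W₂.indicator 1 y * ∑ x : Fin n → F,
              W₁.indicator 1 x * chi p (trp p F (∑ i, (β * y i) * x i))‖ /
              (Fintype.card F : ℝ) ^ (2 * n)
            ≤ (∑ y : Fin n → F, ∏ i : Fin n, (if (i : ℕ) < d then 1 else
                (if y i = 0 then (Fintype.card F : ℝ) else 0))) /
              (Fintype.card F : ℝ) ^ (2 * n) := by
              gcongr
              exact (norm_sum_le _ _).trans (Finset.sum_le_sum fun y _ => hbound y)
          _ = (Fintype.card F : ℝ) ^ n / (Fintype.card F : ℝ) ^ (2 * n) := by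
              congr 1
              rw [sum_pi_prod (fun (i : Fin n) (t : F) => if (i : ℕ) < d then (1:ℝ)
                else if t = 0 then (Fintype.card F : ℝ) else 0)]
              have : ∀ i : Fin n, (∑ t : F, (if (i : ℕ) < d then 1 else
                  (if t = 0 then (Fintype.card F : ℝ) else 0))) = (Fintype.card F : ℝ) := by
                intro i
                split_ifs with hi
                · rw [Finset.sum_const, Finset.card_univ, nsmul_eq_mul, mul_one]
                · rw [Finset.sum_ite_eq' Finset.univ (0 : F)
                    (fun _ => (Fintype.card F : ℝ))]
                  simp
              rw [Finset.prod_congr rfl fun i _ => this i, Finset.prod_const,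
                Finset.card_univ, Fintype.card_fin]
          _ ≤ (Fintype.card F : ℝ) ^ (-(n : ℝ) / 2) := by
              rw [pow_eq_rpow _ hq0, pow_eq_rpow _ hq0]
              refine rp_calc _ hq1 _ _ _ ?_
              push_cast
              have : (0:ℝ) ≤ (n:ℝ) := Nat.cast_nonneg n
              linarith
      · -- γ ≠ 0
        have hQ' : ∀ x y : Fin n → F, Q x y
            = γ * dotp y y + β * dotp y x + α * dotp x x := by
          intro x y
          simp only [Q]
          rw [dotp_comm y x]
          ring
        have hcomm : ∑ x : Fin n → F, ∑ y : Fin n → F,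
            W₁.indicator 1 x * W₂.indicator 1 y * chi p (trp p F (Q x y))
            = ∑ x : Fin n → F, W₁.indicator 1 x * ∑ y : Fin n → F,
              W₂.indicator 1 y * chi p (trp p F (γ * dotp y y + β * dotp y x + α * dotp x x)) := by
          refine Finset.sum_congr rfl fun x _ => ?_
          rw [Finset.mul_sum]
          exact Finset.sum_congr rfl fun y _ => by rw [hQ']; ring
        rw [hcomm]
        calc ‖∑ x : Fin n → F, W₁.indicator 1 x * ∑ y : Fin n → F,
              W₂.indicator 1 y * chi p (trp p F (γ * dotp y y + β * dotp y x + α * dotp x x))‖ /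
              (Fintype.card F : ℝ) ^ (2 * n)
            ≤ ((Fintype.card F : ℝ) ^ n * Real.sqrt (Fintype.card F) ^ n) /
              (Fintype.card F : ℝ) ^ (2 * n) := by
              gcongr
              exact case_helper p F hp hdn x₂ W₁ γ β α hγ
          _ ≤ (Fintype.card F : ℝ) ^ (-(n : ℝ) / 2) := by
              rw [sqrt_pow_eq _ hq0, pow_eq_rpow _ hq0, pow_eq_rpow _ hq0,
                ← Real.rpow_add hqpos]
              refine rp_calc _ hq1 _ _ _ ?_
              push_cast
              linarith
    · -- α ≠ 0
      have hcomm : ∑ x : Fin n → F, ∑ y : Fin n → F,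
          W₁.indicator 1 x * W₂.indicator 1 y * chi p (trp p F (Q x y))
          = ∑ y : Fin n → F, W₂.indicator 1 y * ∑ x : Fin n → F,
            W₁.indicator 1 x * chi p (trp p F (α * dotp x x + β * dotp x y + γ * dotp y y)) := by
        rw [Finset.sum_comm]
        refine Finset.sum_congr rfl fun y _ => ?_
        rw [Finset.mul_sum]
        exact Finset.sum_congr rfl fun x _ => by rw [show Q x y = α * dotp x x + β * dotp x y + γ * dotp y y from rfl]; ring
      rw [hcomm]
      calc ‖∑ y : Fin n → F, W₂.indicator 1 y * ∑ x : Fin n → F,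
            W₁.indicator 1 x * chi p (trp p F (α * dotp x x + β * dotp x y + γ * dotp y y))‖ /
            (Fintype.card F : ℝ) ^ (2 * n)
          ≤ ((Fintype.card F : ℝ) ^ n * Real.sqrt (Fintype.card F) ^ n) /
            (Fintype.card F : ℝ) ^ (2 * n) := by
            gcongr
            exact case_helper p F hp hdn x₁ W₂ α β γ hα
        _ ≤ (Fintype.card F : ℝ) ^ (-(n : ℝ) / 2) := by
            rw [sqrt_pow_eq _ hq0, pow_eq_rpow _ hq0, pow_eq_rpow _ hq0,
              ← Real.rpow_add hqpos]
            refine rp_calc _ hq1 _ _ _ ?_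
            push_cast
            linarith
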